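/- For every real x with 0 ≤ x ≤ 1, every real special orthogonal 3×3 matrix O (OᵀO = I₃ and det O = 1), viewed as a complex matrix, and every 3×3 complex matrix ρ: Λ_x^c(O ρ Oᵀ) = Ω · Λ_x^c(ρ) · Ωᵀ, where Ω is the 4×4 block-diagonal matrix with first diagonal entry 1 and lower-right 3×3 block equal to O; i.e., the complementary channel Λ_x^c is SO(3)-covariant. -/

import Mathlib

open Matrix

/-- The Kraus operators of the channel `Λ_x`:
`K₀ = √(1−x)·I₃` and `K_a = −i·√(x/2)·J_a` for `a = 1,2,3`. -/
noncomputable def K (x : ℝ) : Fin 4 → Matrix (Fin 3) (Fin 3) ℂ :=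
  ![(Real.sqrt (1 - x) : ℂ) • (1 : Matrix (Fin 3) (Fin 3) ℂ),
    (-Complex.I) • (Real.sqrt (x / 2) : ℂ) • !![0, 0, 0; 0, 0, 1; 0, -1, 0],
    (-Complex.I) • (Real.sqrt (x / 2) : ℂ) • !![0, 0, -1; 0, 0, 0; 1, 0, 0],
    (-Complex.I) • (Real.sqrt (x / 2) : ℂ) • !![0, 1, 0; -1, 0, 0; 0, 0, 0]]

/-- The complementary channel `Λ_x^c`, with entries `(Λ_x^c(ρ))_{αβ} = Tr(K_α ρ K_β†)`. -/
noncomputable def LamC (x : ℝ) (ρ : Matrix (Fin 3) (Fin 3) ℂ) : Matrix (Fin 4) (Fin 4) ℂ :=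
  Matrix.of fun α β => (K x α * ρ * (K x β)ᴴ).trace

/-- The `4×4` block-diagonal matrix `Ω` with first diagonal entry `1` and
lower-right `3×3` block equal to the (complexified) matrix `O`. -/
noncomputable def Omega (O : Matrix (Fin 3) (Fin 3) ℝ) : Matrix (Fin 4) (Fin 4) ℂ :=
  !![1, 0, 0, 0;
     0, (O 0 0 : ℂ), (O 0 1 : ℂ), (O 0 2 : ℂ);
     0, (O 1 0 : ℂ), (O 1 1 : ℂ), (O 1 2 : ℂ);
     0, (O 2 0 : ℂ), (O 2 1 : ℂ), (O 2 2 : ℂ)]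

/-!
Up to the scalar `-i√(x/2)`, the Kraus operator `K_a` (`a = 1, 2, 3`) is the matrix of
`v ↦ v × e_a`, while `K₀` is scalar. A rotation commutes with the cross product, so
`Oᵀ K_a O = ∑_b O_ab K_b`, i.e. `K_α O = O ∑_γ Ω_αγ K_γ`. The entries `Tr(K_α ρ K_β†)` are
sesquilinear in the Kraus operators and unchanged by a common unitary left factor, which turns
this covariance of the Kraus family into `Λ_x^c(O ρ Oᵀ) = Ω Λ_x^c(ρ) Ωᵀ`.
-/

section CrossProduct

variable {R : Type*} [CommRing R]

def crossMatrix (w : Fin 3 → R) : Matrix (Fin 3) (Fin 3) R :=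
  !![0, w 2, -w 1; -w 2, 0, w 0; w 1, -w 0, 0]

theorem crossMatrix_mulVec (w v : Fin 3 → R) : crossMatrix w *ᵥ v = v ⨯₃ w := by
  ext i
  fin_cases i <;> simp [crossMatrix, cross_apply, mulVec, dotProduct, Fin.sum_univ_three] <;> ring

theorem crossMatrix_eq_sum_smul (w : Fin 3 → R) :
    crossMatrix w = ∑ b, w b • crossMatrix (Pi.single b 1) := by
  ext i j
  fin_cases i <;> fin_cases j <;> simp [crossMatrix, Fin.sum_univ_three]

theorem transpose_mulVec_cross_mulVec (A : Matrix (Fin 3) (Fin 3) R) (u v : Fin 3 → R) :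
    Aᵀ *ᵥ ((A *ᵥ u) ⨯₃ (A *ᵥ v)) = A.det • (u ⨯₃ v) := by
  ext i
  fin_cases i <;>
    simp [cross_apply, mulVec, dotProduct, Fin.sum_univ_three, det_fin_three] <;> ring

variable {A : Matrix (Fin 3) (Fin 3) R}

theorem mulVec_cross_of_special_orthogonal (hA : Aᵀ * A = 1) (hdet : A.det = 1)
    (u v : Fin 3 → R) : A *ᵥ (u ⨯₃ v) = (A *ᵥ u) ⨯₃ (A *ᵥ v) := by
  rw [← one_smul R (u ⨯₃ v), ← hdet, ← transpose_mulVec_cross_mulVec, mulVec_mulVec,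
    mul_eq_one_comm.mp hA, one_mulVec]

theorem transpose_mul_crossMatrix_mul (hA : Aᵀ * A = 1) (hdet : A.det = 1) (w : Fin 3 → R) :
    Aᵀ * crossMatrix w * A = crossMatrix (Aᵀ *ᵥ w) := by
  refine ext_iff_mulVec.mpr fun v => ?_
  have hw : w = A *ᵥ (Aᵀ *ᵥ w) := by rw [mulVec_mulVec, mul_eq_one_comm.mp hA, one_mulVec]
  rw [← mulVec_mulVec, ← mulVec_mulVec, crossMatrix_mulVec, crossMatrix_mulVec, hw,
    ← mulVec_cross_of_special_orthogonal hA hdet, mulVec_mulVec, hA, one_mulVec, ← hw]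

end CrossProduct

section ComplementaryChannel

variable {ι κ n R : Type*} [Fintype n] [CommRing R] [StarRing R]

def complementaryChannel (K : ι → Matrix n n R) (ρ : Matrix n n R) : Matrix ι ι R :=
  of fun α β => (K α * ρ * (K β)ᴴ).trace

theorem complementaryChannel_mul_right (K : ι → Matrix n n R) (M ρ : Matrix n n R) :
    complementaryChannel (fun α => K α * M) ρ = complementaryChannel K (M * ρ * Mᴴ) := by
  ext α β
  simp only [complementaryChannel, of_apply, conjTranspose_mul, Matrix.mul_assoc]

theorem complementaryChannel_unitary_mul [DecidableEq n] (K : ι → Matrix n n R)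
    {M : Matrix n n R} (hM : Mᴴ * M = 1) (ρ : Matrix n n R) :
    complementaryChannel (fun α => M * K α) ρ = complementaryChannel K ρ := by
  ext α β
  simp only [complementaryChannel, of_apply, conjTranspose_mul]
  rw [show M * K α * ρ * ((K β)ᴴ * Mᴴ) = M * (K α * ρ * (K β)ᴴ * Mᴴ) by
      simp only [Matrix.mul_assoc],
    trace_mul_comm, Matrix.mul_assoc, hM, Matrix.mul_one]

theorem complementaryChannel_sum_smul [Fintype κ] (K : κ → Matrix n n R) (U : Matrix ι κ R)
    (ρ : Matrix n n R) :
    complementaryChannel (fun α => ∑ γ, U α γ • K γ) ρ = U * complementaryChannel K ρ * Uᴴ := by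
  ext α β
  simp only [complementaryChannel, of_apply, mul_apply, conjTranspose_apply,
    Matrix.mul_sum, conjTranspose_sum, conjTranspose_smul, smul_mul, Matrix.mul_smul, trace_sum,
    trace_smul, Finset.sum_mul, smul_eq_mul]
  rw [Finset.sum_comm]
  refine Finset.sum_congr rfl fun γ _ => Finset.sum_congr rfl fun δ _ => ?_
  ring

theorem complementaryChannel_covariant [Fintype ι] [DecidableEq n] {K : ι → Matrix n n R}
    {M : Matrix n n R} (hM : Mᴴ * M = 1) {U : Matrix ι ι R}
    (hK : ∀ α, K α * M = M * ∑ γ, U α γ • K γ)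
    (ρ : Matrix n n R) :
    complementaryChannel K (M * ρ * Mᴴ) = U * complementaryChannel K ρ * Uᴴ := by
  rw [← complementaryChannel_mul_right, funext hK,
    complementaryChannel_unitary_mul (fun α => ∑ γ, U α γ • K γ) hM, complementaryChannel_sum_smul]

end ComplementaryChannel

theorem LamC_eq_complementaryChannel (x : ℝ) : LamC x = complementaryChannel (K x) := rfl

theorem K_zero (x : ℝ) : K x 0 = (Real.sqrt (1 - x) : ℂ) • 1 := rfl

theorem K_succ (x : ℝ) (a : Fin 3) :
    K x a.succ = (-Complex.I * Real.sqrt (x / 2)) • crossMatrix (Pi.single a 1) := by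
  rw [mul_smul]
  fin_cases a <;> ext i j <;> fin_cases i <;> fin_cases j <;> simp [K, crossMatrix]

section Omega

variable (O : Matrix (Fin 3) (Fin 3) ℝ)

theorem Omega_zero : Omega O 0 = Pi.single 0 1 := by
  ext γ
  fin_cases γ <;> simp [Omega]

theorem Omega_succ_zero (a : Fin 3) : Omega O a.succ 0 = 0 := by
  fin_cases a <;> simp [Omega]

theorem Omega_succ_succ (a b : Fin 3) : Omega O a.succ b.succ = O a b := by
  fin_cases a <;> fin_cases b <;> simp [Omega]

theorem conjTranspose_Omega : (Omega O)ᴴ = (Omega O)ᵀ := by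
  ext α β
  fin_cases α <;> fin_cases β <;> simp [Omega]

end Omega

theorem transpose_map_ofReal_mul_self {n : Type*} [Fintype n] [DecidableEq n]
    {O : Matrix n n ℝ} (hO : Oᵀ * O = 1) :
    (O.map Complex.ofReal)ᵀ * O.map Complex.ofReal = 1 := by
  rw [← transpose_map]
  change Complex.ofRealHom.mapMatrix Oᵀ * Complex.ofRealHom.mapMatrix O = 1
  rw [← map_mul, hO, map_one]

theorem conjTranspose_map_ofReal {m n : Type*} (O : Matrix m n ℝ) :
    (O.map Complex.ofReal)ᴴ = (O.map Complex.ofReal)ᵀ := by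
  ext i j
  simp

theorem K_mul_eq_mul_sum_Omega_smul (x : ℝ) {O : Matrix (Fin 3) (Fin 3) ℝ} (hO : Oᵀ * O = 1)
    (hdet : O.det = 1) (α : Fin 4) :
    K x α * O.map Complex.ofReal = O.map Complex.ofReal * ∑ γ, Omega O α γ • K x γ := by
  set M := O.map Complex.ofReal
  have hM : Mᵀ * M = 1 := transpose_map_ofReal_mul_self hO
  have hMdet : M.det = 1 := by
    change (Complex.ofRealHom.mapMatrix O).det = 1
    rw [← RingHom.map_det, hdet, map_one]
  induction α using Fin.cases with
  | zero => simp [Omega_zero, K_zero]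
  | succ a =>
    have hsum : ∑ γ, Omega O a.succ γ • K x γ = Mᵀ * K x a.succ * M := by
      rw [K_succ, Matrix.mul_smul, Matrix.smul_mul, transpose_mul_crossMatrix_mul hM hMdet,
        crossMatrix_eq_sum_smul, Finset.smul_sum, Fin.sum_univ_succ, Omega_succ_zero, zero_smul,
        zero_add]
      simp only [Omega_succ_succ, K_succ, smul_smul, M]
      refine Finset.sum_congr rfl fun b _ => ?_
      rw [mulVec_single_one, mul_comm]
      rfl
    rw [hsum, ← Matrix.mul_assoc, ← Matrix.mul_assoc, mul_eq_one_comm.mp hM, Matrix.one_mul]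

theorem lamC_SO3_covariant_general (x : ℝ)
    (O : Matrix (Fin 3) (Fin 3) ℝ) (hO : Oᵀ * O = 1) (hdet : O.det = 1)
    (ρ : Matrix (Fin 3) (Fin 3) ℂ) :
    LamC x (O.map Complex.ofReal * ρ * (O.map Complex.ofReal)ᵀ) =
      Omega O * LamC x ρ * (Omega O)ᵀ := by
  have hunitary : (O.map Complex.ofReal)ᴴ * O.map Complex.ofReal = 1 := by
    rw [conjTranspose_map_ofReal, transpose_map_ofReal_mul_self hO]
  rw [LamC_eq_complementaryChannel, ← conjTranspose_map_ofReal, ← conjTranspose_Omega]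
  exact complementaryChannel_covariant hunitary (K_mul_eq_mul_sum_Omega_smul x hO hdet) ρ

/-- The complementary channel `Λ_x^c` is `SO(3)`-covariant: for a real special
orthogonal matrix `O`, `Λ_x^c(O ρ Oᵀ) = Ω Λ_x^c(ρ) Ωᵀ`. -/
theorem lamC_SO3_covariant (x : ℝ) (hx0 : 0 ≤ x) (hx1 : x ≤ 1)
    (O : Matrix (Fin 3) (Fin 3) ℝ) (hO : Oᵀ * O = 1) (hdet : O.det = 1)
    (ρ : Matrix (Fin 3) (Fin 3) ℂ) :
    LamC x (O.map Complex.ofReal * ρ * (O.map Complex.ofReal)ᵀ) =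
      Omega O * LamC x ρ * (Omega O)ᵀ :=
  lamC_SO3_covariant_general x O hO hdet ρ
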